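/- arXiv:1902.05863 — 2 statements merged into one kernel-verified Lean document; each statement's English description precedes it below -/
import Mathlib

section
/- Consider a schedule of n jobs in m batches given by an assignment B : Fin n → Fin m, with batch processing times P b = max of p j over jobs in batch b, batches processed in the given order, completion times C b = Σ_{b' ≤ b} P b', job completion times c j = C (B j), and tardy jobs those with c j > d j. Let b0 be a batch all of whose jobs are tardy, and form a new processing order by moving batch b0 to the last position while keeping the relative order of all other batches (i.e. batch b is processed at position σ(b), where σ(b0) = m−1, σ(b) = b for b < b0, and σ(b) = b−1 for b > b0; the new completion time of batch b is C' b = Σ_{b' : σ(b') ≤ σ(b)} P b'). Then C' b ≤ C b for every batch b ≠ b0, and the total number of tardy jobs under the new order is at most the total number of tardy jobs under the original order. Hence batches containing only tardy jobs may be postponed to the end without increasing the number of tardy jobs. -/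
/-!
Removing `b0` from its position shifts every later batch one step earlier and leaves the
relative order of the other batches unchanged, so each batch `b ≠ b0` is now preceded only by
batches that preceded it before: `C' b` is a sub-sum of `C b`. Hence jobs outside `b0` can only
become earlier, and the jobs of `b0` were tardy anyway.
-/

namespace Fin

structure IsPostponement {m : ℕ} (b0 : Fin m) (σ : Fin m → Fin m) : Prop where
  val_self : (σ b0 : ℕ) = m - 1
  val_of_lt : ∀ b, b < b0 → (σ b : ℕ) = b
  val_of_gt : ∀ b, b0 < b → (σ b : ℕ) = b - 1

namespace IsPostponement

variable {m : ℕ} {b0 : Fin m} {σ : Fin m → Fin m}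

theorem val_lt_of_ne (hσ : IsPostponement b0 σ) {b : Fin m} (hb : b ≠ b0) :
    (σ b : ℕ) < m - 1 := by
  have := b.isLt
  rcases lt_or_gt_of_ne hb with h | h
  · rw [hσ.val_of_lt b h]
    have := b0.isLt
    omega
  · rw [hσ.val_of_gt b h]
    omega

theorem le_of_apply_le (hσ : IsPostponement b0 σ) {b b' : Fin m} (hb : b ≠ b0)
    (hle : σ b' ≤ σ b) : b' ≤ b := by
  have hle : (σ b' : ℕ) ≤ σ b := hle
  have hb' : b' ≠ b0 := by
    rintro rfl
    have := hσ.val_lt_of_ne hb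
    have := hσ.val_self
    omega
  rw [Fin.le_def]
  rcases lt_or_gt_of_ne hb' with h' | h' <;> rcases lt_or_gt_of_ne hb with h | h
  · rwa [hσ.val_of_lt b' h', hσ.val_of_lt b h] at hle
  · rw [hσ.val_of_lt b' h', hσ.val_of_gt b h] at hle
    rw [Fin.lt_def] at h
    omega
  · rw [hσ.val_of_gt b' h', hσ.val_of_lt b h] at hle
    rw [Fin.lt_def] at h h'
    omega
  · rw [hσ.val_of_gt b' h', hσ.val_of_gt b h] at hle
    rw [Fin.lt_def] at h h'
    omega

theorem filter_apply_le_subset_Iic (hσ : IsPostponement b0 σ) {b : Fin m} (hb : b ≠ b0) :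
    Finset.univ.filter (fun b' => σ b' ≤ σ b) ⊆ Finset.Iic b := fun _ hb' =>
  Finset.mem_Iic.2 <| hσ.le_of_apply_le hb (Finset.mem_filter.1 hb').2

end IsPostponement

end Fin

theorem postpone_all_tardy_batch_general
    (n m : ℕ) (d : Fin n → ℕ) (B : Fin n → Fin m)
    (P : Fin m → ℕ)
    (C : Fin m → ℕ) (hC : ∀ b, C b = ∑ b' ∈ Finset.Iic b, P b')
    (b0 : Fin m) (hb0 : ∀ j : Fin n, B j = b0 → C (B j) > d j)
    (σ : Fin m → Fin m)
    (hσ0 : (σ b0 : ℕ) = m - 1)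
    (hσlt : ∀ b : Fin m, b < b0 → (σ b : ℕ) = (b : ℕ))
    (hσgt : ∀ b : Fin m, b0 < b → (σ b : ℕ) = (b : ℕ) - 1)
    (C' : Fin m → ℕ)
    (hC' : ∀ b, C' b = ∑ b' ∈ Finset.univ.filter (fun b' => σ b' ≤ σ b), P b') :
    (∀ b : Fin m, b ≠ b0 → C' b ≤ C b) ∧
    (Finset.univ.filter (fun j : Fin n => C' (B j) > d j)).card ≤
      (Finset.univ.filter (fun j : Fin n => C (B j) > d j)).card := by
  have hσ : Fin.IsPostponement b0 σ := ⟨hσ0, hσlt, hσgt⟩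
  have hC'_le : ∀ b, b ≠ b0 → C' b ≤ C b := fun b hb => by
    rw [hC', hC]
    exact Finset.sum_le_sum_of_subset (hσ.filter_apply_le_subset_Iic hb)
  refine ⟨hC'_le, Finset.card_le_card (Finset.monotone_filter_right _ fun j _ hj => ?_)⟩
  by_cases hB : B j = b0
  · exact hb0 j hB
  · exact lt_of_lt_of_le hj (hC'_le (B j) hB)

/-- Postponing a batch all of whose jobs are tardy to the last position (keeping
the relative order of all other batches) does not increase the completion time
of any other batch, nor the total number of tardy jobs. -/
theorem postpone_all_tardy_batch
    (n m : ℕ) (p d : Fin n → ℕ) (B : Fin n → Fin m)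
    (P : Fin m → ℕ)
    (hP : ∀ b, P b = (Finset.univ.filter (fun j => B j = b)).sup p)
    (C : Fin m → ℕ) (hC : ∀ b, C b = ∑ b' ∈ Finset.Iic b, P b')
    (b0 : Fin m) (hb0 : ∀ j : Fin n, B j = b0 → C (B j) > d j)
    (σ : Fin m → Fin m)
    (hσ0 : (σ b0 : ℕ) = m - 1)
    (hσlt : ∀ b : Fin m, b < b0 → (σ b : ℕ) = (b : ℕ))
    (hσgt : ∀ b : Fin m, b0 < b → (σ b : ℕ) = (b : ℕ) - 1)
    (C' : Fin m → ℕ)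
    (hC' : ∀ b, C' b = ∑ b' ∈ Finset.univ.filter (fun b' => σ b' ≤ σ b), P b') :
    (∀ b : Fin m, b ≠ b0 → C' b ≤ C b) ∧
    (Finset.univ.filter (fun j : Fin n => C' (B j) > d j)).card ≤
      (Finset.univ.filter (fun j : Fin n => C (B j) > d j)).card :=
  postpone_all_tardy_batch_general n m d B P C hC b0 hb0 σ hσ0 hσlt hσgt C' hC'
end

section
/- Consider a schedule of n jobs in m batches B : Fin n → Fin m with batch processing times P b = max of p j over jobs in batch b (0 for an empty batch), completion times C b = Σ_{b' ≤ b} P b', and job completion times c j = C (B j). Let j0 be a job whose processing time is maximal in its batch b0 = B j0, and form a new schedule B' with m+1 batches by keeping every other job in its original batch (via the canonical embedding Fin m → Fin (m+1)) and assigning j0 alone to the new last batch m. Then the new batch processing times satisfy P' b ≤ P b for every b < m (with P' m = p j0), the new completion time of every job j ≠ j0 satisfies c' j ≤ c j, and consequently the number of tardy jobs among the jobs other than j0 under the new schedule is at most that number under the original schedule. -/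
/-!
Every job left in an original batch `b` was already in `b`, so the new batch is a sub-batch and
its processing time, a maximum over fewer jobs, can only drop. Completion times are prefix sums
of batch processing times, and the new batch is appended after all original ones, so the
completion time of every other job can only drop as well; a job that is on time stays on time.
-/

open Finset

section BatchSchedule

variable {ι β : Type*} [Fintype ι] [DecidableEq β]

def batchTime (p : ι → ℕ) (B : ι → β) (b : β) : ℕ :=
  (univ.filter fun j => B j = b).sup p

lemma batchTime_mono {p : ι → ℕ} {B : ι → β} {γ : Type*} [DecidableEq γ] {B' : ι → γ}
    {b : β} {b' : γ} (h : ∀ j, B' j = b' → B j = b) :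
    batchTime p B' b' ≤ batchTime p B b :=
  sup_mono fun j hj => by simpa using h j (by simpa using hj)

end BatchSchedule

def insertLast {n m : ℕ} (B : Fin n → Fin m) (j0 : Fin n) :
    Fin n → Fin (m + 1) :=
  fun j => if j = j0 then Fin.last m else (B j).castSucc

section InsertLast

variable {n m : ℕ} (p : Fin n → ℕ) (B : Fin n → Fin m) (j0 : Fin n)

lemma batchTime_insertLast_castSucc_le (b : Fin m) :
    batchTime p (insertLast B j0) b.castSucc ≤ batchTime p B b :=
  batchTime_mono fun j hj => by
    by_cases hj0 : j = j0
    · simp [insertLast, hj0, (Fin.castSucc_lt_last b).ne'] at hj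
    · simpa [insertLast, hj0] using hj

lemma batchTime_insertLast_last : batchTime p (insertLast B j0) (Fin.last m) = p j0 := by
  have hbatch : (univ.filter fun j => insertLast B j0 j = Fin.last m) = {j0} := by
    ext j
    by_cases hj0 : j = j0 <;> simp [insertLast, hj0, Fin.castSucc_ne_last]
  rw [batchTime, hbatch, sup_singleton]

end InsertLast

lemma Fin.sum_Iic_castSucc_le {M : Type*} [AddCommMonoid M] [PartialOrder M]
    [IsOrderedAddMonoid M] {m : ℕ} {f : Fin (m + 1) → M} {g : Fin m → M}
    (h : ∀ b, f b.castSucc ≤ g b) (b : Fin m) :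
    ∑ b' ∈ Iic b.castSucc, f b' ≤ ∑ b' ∈ Iic b, g b' := by
  rw [← Fin.map_castSuccEmb_Iic, sum_map]
  exact sum_le_sum fun b' _ => h b'

lemma card_filter_and_gt_le_of_le {ι : Type*} {s : Finset ι} {q : ι → Prop} [DecidablePred q]
    {d c' c : ι → ℕ} (h : ∀ j, q j → c' j ≤ c j) :
    (s.filter fun j => q j ∧ c' j > d j).card ≤ (s.filter fun j => q j ∧ c j > d j).card :=
  card_le_card <| monotone_filter_right s fun j _ hj => ⟨hj.1, hj.2.trans_le (h j hj.1)⟩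

theorem job_insertion_longest_job_general
    (n m : ℕ) (p d : Fin n → ℕ) (B : Fin n → Fin m)
    (P : Fin m → ℕ)
    (hP : ∀ b, P b = (Finset.univ.filter (fun j => B j = b)).sup p)
    (C : Fin m → ℕ) (hC : ∀ b, C b = ∑ b' ∈ Finset.Iic b, P b')
    (c : Fin n → ℕ) (hc : ∀ j, c j = C (B j))
    (j0 : Fin n)
    (B' : Fin n → Fin (m + 1))
    (hB' : ∀ j : Fin n, B' j = if j = j0 then Fin.last m else Fin.castSucc (B j))
    (P' : Fin (m + 1) → ℕ)
    (hP' : ∀ b, P' b = (Finset.univ.filter (fun j => B' j = b)).sup p)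
    (C' : Fin (m + 1) → ℕ) (hC' : ∀ b, C' b = ∑ b' ∈ Finset.Iic b, P' b')
    (c' : Fin n → ℕ) (hc' : ∀ j, c' j = C' (B' j)) :
    (∀ b : Fin m, P' (Fin.castSucc b) ≤ P b) ∧
    (P' (Fin.last m) = p j0) ∧
    (∀ j : Fin n, j ≠ j0 → c' j ≤ c j) ∧
    ((Finset.univ.filter (fun j : Fin n => j ≠ j0 ∧ c' j > d j)).card ≤
      (Finset.univ.filter (fun j : Fin n => j ≠ j0 ∧ c j > d j)).card) := by
  obtain rfl : B' = insertLast B j0 := funext hB'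
  obtain rfl : P = batchTime p B := funext hP
  obtain rfl : P' = batchTime p (insertLast B j0) := funext hP'
  have hbatch : ∀ b : Fin m, batchTime p (insertLast B j0) b.castSucc ≤ batchTime p B b :=
    batchTime_insertLast_castSucc_le p B j0
  have hjob : ∀ j, j ≠ j0 → c' j ≤ c j := fun j hj => by
    rw [hc', hc, hC', hC, insertLast, if_neg hj]
    exact Fin.sum_Iic_castSucc_le hbatch (B j)
  exact ⟨hbatch, batchTime_insertLast_last p B j0, hjob, card_filter_and_gt_le_of_le hjob⟩

/-- Job insertion: moving a job `j0` of maximal processing time in its batch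
into a new batch placed last does not increase any original batch's processing
time, does not delay any other job, and hence does not increase the number of
tardy jobs among the other jobs. The new batch has processing time `p j0`. -/
theorem job_insertion_longest_job
    (n m : ℕ) (p d : Fin n → ℕ) (B : Fin n → Fin m)
    (P : Fin m → ℕ)
    (hP : ∀ b, P b = (Finset.univ.filter (fun j => B j = b)).sup p)
    (C : Fin m → ℕ) (hC : ∀ b, C b = ∑ b' ∈ Finset.Iic b, P b')
    (c : Fin n → ℕ) (hc : ∀ j, c j = C (B j))
    (j0 : Fin n) (hj0 : ∀ j : Fin n, B j = B j0 → p j ≤ p j0)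
    (B' : Fin n → Fin (m + 1))
    (hB' : ∀ j : Fin n, B' j = if j = j0 then Fin.last m else Fin.castSucc (B j))
    (P' : Fin (m + 1) → ℕ)
    (hP' : ∀ b, P' b = (Finset.univ.filter (fun j => B' j = b)).sup p)
    (C' : Fin (m + 1) → ℕ) (hC' : ∀ b, C' b = ∑ b' ∈ Finset.Iic b, P' b')
    (c' : Fin n → ℕ) (hc' : ∀ j, c' j = C' (B' j)) :
    (∀ b : Fin m, P' (Fin.castSucc b) ≤ P b) ∧
    (P' (Fin.last m) = p j0) ∧
    (∀ j : Fin n, j ≠ j0 → c' j ≤ c j) ∧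
    ((Finset.univ.filter (fun j : Fin n => j ≠ j0 ∧ c' j > d j)).card ≤
      (Finset.univ.filter (fun j : Fin n => j ≠ j0 ∧ c j > d j)).card) :=
  job_insertion_longest_job_general n m p d B P hP C hC c hc j0 B' hB' P' hP' C' hC' c' hc'
end
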